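/- Closed form of the maximum moment restriction: define 𝕄(θ) := sup_{‖f‖_{F^q} ≤ 1} E[ψ(Z;θ)ᵀf(X)]. If E[h_θ((X,Z),(X,Z))] < ∞ where h_θ((x,z),(x',z')) = ψ(z;θ)ᵀψ(z';θ)k(x,x'), then 𝕄(θ)² = E[h_θ((X,Z),(X',Z'))], where (X',Z') is an independent copy of (X,Z). -/

import Mathlib

open MeasureTheory
open scoped InnerProductSpace

/-!
Each expectation `E[ψᵢ ⟪fᵢ, Φ(X)⟫]` is `⟪fᵢ, μᵢ⟫` for the Bochner mean `μ = E[ξ]` of the feature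
`ξ = (ψᵢ • Φ(X))ᵢ`, so `𝕄` is the supremum of `⟪f, μ⟫` over the unit ball, i.e. `‖μ‖`. Finally
`‖μ‖² = ⟪E ξ, E ξ'⟫ = E ⟪ξ, ξ'⟫` by Fubini for the product measure, and
`⟪ξ, ξ'⟫ = ψᵀψ' k(X, X')`.
-/

section InnerProductSpace

variable {E : Type*} [NormedAddCommGroup E] [InnerProductSpace ℝ E]

lemma sSup_inner_unitClosedBall_eq_norm (v : E) :
    sSup {y : ℝ | ∃ f : E, ‖f‖ ≤ 1 ∧ y = ⟪f, v⟫_ℝ} = ‖v‖ := by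
  refine IsGreatest.csSup_eq ⟨?_, ?_⟩
  · rcases eq_or_ne v 0 with rfl | hv
    · exact ⟨0, by simp, by simp⟩
    · have hv' : ‖v‖ ≠ 0 := norm_ne_zero_iff.2 hv
      refine ⟨‖v‖⁻¹ • v, ?_, ?_⟩
      · rw [norm_smul, norm_inv, norm_norm, inv_mul_cancel₀ hv']
      · rw [real_inner_smul_left, real_inner_self_eq_norm_sq]
        field_simp
  · rintro y ⟨f, hf, rfl⟩
    calc ⟪f, v⟫_ℝ ≤ ‖f‖ * ‖v‖ := real_inner_le_norm f v
      _ ≤ ‖v‖ := mul_le_of_le_one_left (norm_nonneg v) hf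

lemma inner_integral_eq_integral_prod [CompleteSpace E] {α β : Type*} [MeasurableSpace α]
    [MeasurableSpace β] {μ : Measure α} {ν : Measure β} [SFinite μ] [SFinite ν]
    {ξ : α → E} {η : β → E}
    (hξ : Integrable ξ μ) (hη : Integrable η ν) :
    ⟪∫ a, ξ a ∂μ, ∫ b, η b ∂ν⟫_ℝ = ∫ z, ⟪ξ z.1, η z.2⟫_ℝ ∂(μ.prod ν) :=
  (integral_prod_bilin (innerSL ℝ) hξ hη).symm

end InnerProductSpace

section MomentFeature

variable {Ω ι H : Type*} [Fintype ι] [NormedAddCommGroup H] [InnerProductSpace ℝ H]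

/-- The paper's `ξ_θ`, with `φ = Φ ∘ X`; its Bochner mean is the conditional moment embedding `μ_θ`. -/
def momentFeature (ψ : Ω → ι → ℝ) (φ : Ω → H) (ω : Ω) : PiLp 2 fun _ : ι => H :=
  WithLp.toLp 2 fun i => ψ ω i • φ ω

lemma inner_momentFeature (ψ : Ω → ι → ℝ) (φ : Ω → H) (f : PiLp 2 fun _ : ι => H) (ω : Ω) :
    ⟪f, momentFeature ψ φ ω⟫_ℝ = ∑ i, ψ ω i * ⟪f i, φ ω⟫_ℝ := by
  simp [momentFeature, PiLp.inner_apply, real_inner_smul_right]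

lemma inner_momentFeature_momentFeature (ψ : Ω → ι → ℝ) (φ : Ω → H) (ω ω' : Ω) :
    ⟪momentFeature ψ φ ω, momentFeature ψ φ ω'⟫_ℝ = (∑ i, ψ ω i * ψ ω' i) * ⟪φ ω, φ ω'⟫_ℝ := by
  simp only [momentFeature, PiLp.inner_apply, real_inner_smul_left, real_inner_smul_right,
    Finset.sum_mul]
  exact Finset.sum_congr rfl fun i _ => by ring

lemma sum_integral_eq_inner_integral_momentFeature [CompleteSpace H] [MeasurableSpace Ω]
    {P : Measure Ω} {ψ : Ω → ι → ℝ} {φ : Ω → H} (hξ : Integrable (momentFeature ψ φ) P)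
    (f : PiLp 2 fun _ : ι => H) :
    ∑ i, ∫ ω, ψ ω i * ⟪f i, φ ω⟫_ℝ ∂P = ⟪f, ∫ ω, momentFeature ψ φ ω ∂P⟫_ℝ := by
  have hcomp (i : ι) : Integrable (fun ω => ψ ω i * ⟪f i, φ ω⟫_ℝ) P := by
    have hξi := (PiLp.proj 2 (𝕜 := ℝ) (fun _ : ι => H) i).integrable_comp hξ
    refine (hξi.const_inner (f i)).congr (Filter.Eventually.of_forall fun ω => ?_)
    simp [momentFeature, real_inner_smul_right]
  rw [← integral_inner hξ f, ← integral_finsetSum _ fun i _ => hcomp i]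
  simp only [inner_momentFeature]

end MomentFeature

theorem stmt10_general {Ω 𝓧 H : Type*} [MeasurableSpace Ω]
    [NormedAddCommGroup H] [InnerProductSpace ℝ H] [CompleteSpace H]
    (P : Measure Ω) [IsProbabilityMeasure P] (q : ℕ)
    (X : Ω → 𝓧)
    (Φ : 𝓧 → H)
    (k : 𝓧 → 𝓧 → ℝ) (hk : ∀ x x', k x x' = ⟪Φ x, Φ x'⟫_ℝ)
    (ψ : Ω → Fin q → ℝ)
    (hξint : Integrable
      (fun ω => (WithLp.toLp 2 (fun i => ψ ω i • Φ (X ω)) : PiLp 2 fun _ : Fin q => H)) P) :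
    (sSup {y : ℝ | ∃ f : PiLp 2 fun _ : Fin q => H, ‖f‖ ≤ 1 ∧
        y = ∑ i : Fin q, ∫ ω, ψ ω i * ⟪f i, Φ (X ω)⟫_ℝ ∂P}) ^ 2 =
      ∫ p, (∑ i : Fin q, ψ p.1 i * ψ p.2 i) * k (X p.1) (X p.2) ∂(P.prod P) := by
  have hξ : Integrable (momentFeature ψ fun ω => Φ (X ω)) P := hξint
  simp only [sum_integral_eq_inner_integral_momentFeature hξ, sSup_inner_unitClosedBall_eq_norm]
  rw [← real_inner_self_eq_norm_sq, inner_integral_eq_integral_prod hξ hξ]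
  simp only [inner_momentFeature_momentFeature, hk]

/-- Closed form of the maximum moment restriction: define
`𝕄(θ) = sup_{‖f‖_{F^q} ≤ 1} E[ψ(Z;θ)ᵀ f(X)]`.  If `E[h_θ((X,Z),(X,Z))] < ∞` for
`h_θ((x,z),(x',z')) = ψ(z;θ)ᵀψ(z';θ)k(x,x')`, then
`𝕄(θ)² = E[h_θ((X,Z),(X',Z'))]` with `(X',Z')` an independent copy of `(X,Z)`.
The RKHS of `k` is realized by a feature map `Φ` with `k(x,x') = ⟪Φ x, Φ x'⟫`. -/
theorem stmt10 {Ω 𝓧 H : Type*} [MeasurableSpace Ω] [MeasurableSpace 𝓧]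
    [NormedAddCommGroup H] [InnerProductSpace ℝ H] [CompleteSpace H]
    (P : Measure Ω) [IsProbabilityMeasure P] (q : ℕ)
    (X : Ω → 𝓧) (hX : Measurable X)
    (Φ : 𝓧 → H) (hΦmeas : AEStronglyMeasurable (fun ω => Φ (X ω)) P)
    (k : 𝓧 → 𝓧 → ℝ) (hk : ∀ x x', k x x' = ⟪Φ x, Φ x'⟫_ℝ)
    (ψ : Ω → Fin q → ℝ) (hψmeas : ∀ i, Measurable fun ω => ψ ω i)
    (hξint : Integrable
      (fun ω => (WithLp.toLp 2 (fun i => ψ ω i • Φ (X ω)) : PiLp 2 fun _ : Fin q => H)) P)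
    (hhdiag : Integrable (fun ω => (∑ i : Fin q, ψ ω i * ψ ω i) * k (X ω) (X ω)) P) :
    (sSup {y : ℝ | ∃ f : PiLp 2 fun _ : Fin q => H, ‖f‖ ≤ 1 ∧
        y = ∑ i : Fin q, ∫ ω, ψ ω i * ⟪f i, Φ (X ω)⟫_ℝ ∂P}) ^ 2 =
      ∫ p, (∑ i : Fin q, ψ p.1 i * ψ p.2 i) * k (X p.1) (X p.2) ∂(P.prod P) :=
  stmt10_general P q X Φ k hk ψ hξint
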